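/- arXiv:2404.00329 — 2 statements merged into one kernel-verified Lean document; each statement's English description precedes it below -/
import Mathlib

section
/- Let ν be a nonnegative function on dyadic cubes satisfying ν(P) ≤ θ^k ν(Q) whenever P ⊆ Q are dyadic cubes with ℓ(P) = 2^{-k}ℓ(Q), for some fixed θ ∈ (0,1), together with additivity Σ_{P child of Q} ν(P) = ν(Q). Fix 1 ≤ p < ∞. Then the linear operator M' defined on nonnegative sequences R = {R_P}_{P∈D} by M'(R)(Q) := (1/ν(Q)) Σ_{P∈D, P⊆Q} ν(P) R_P is bounded on ℓ^p(D): there exists a constant C = C(θ, p, n) with ‖M'(R)‖_{ℓ^p} ≤ C ‖R‖_{ℓ^p}. -/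
open MeasureTheory Filter
open scoped ENNReal BigOperators

noncomputable section

def cube (n : ℕ) (c : Fin n → ℝ) (l : ℝ) : Set (Fin n → ℝ) :=
  {x | ∀ i, c i ≤ x i ∧ x i < c i + l}

def IsApBound (n : ℕ) (p : ℝ) (w : (Fin n → ℝ) → ℝ) (C : ℝ) : Prop :=
  ∀ c : Fin n → ℝ, ∀ l : ℝ, 0 < l →
    ((volume (cube n c l)).toReal⁻¹ * ∫ x in cube n c l, w x) *
      ((volume (cube n c l)).toReal⁻¹ * ∫ x in cube n c l, (w x) ^ (-(1/(p-1)) : ℝ)) ^ (p-1) ≤ C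

structure DyadicCube (n : ℕ) where
  k : ℤ
  m : Fin n → ℤ

def DyadicCube.side {n : ℕ} (Q : DyadicCube n) : ℝ := (2:ℝ) ^ (-Q.k)

def DyadicCube.corner {n : ℕ} (Q : DyadicCube n) : Fin n → ℝ :=
  fun i => (Q.m i : ℝ) * (2:ℝ) ^ (-Q.k)

def DyadicCube.toSet {n : ℕ} (Q : DyadicCube n) : Set (Fin n → ℝ) :=
  cube n Q.corner Q.side

def haar1 (ε : Bool) (a l : ℝ) (x : ℝ) : ℝ :=
  if ε = true then (if a ≤ x ∧ x < a + l then l ^ (-(1/2) : ℝ) else 0)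
  else (if a ≤ x ∧ x < a + l/2 then l ^ (-(1/2) : ℝ)
        else if a + l/2 ≤ x ∧ x < a + l then -(l ^ (-(1/2) : ℝ)) else 0)

def haarCube (n : ℕ) (ε : Fin n → Bool) (a : Fin n → ℝ) (l : ℝ) (x : Fin n → ℝ) : ℝ :=
  ∏ i, haar1 (ε i) (a i) l (x i)

def haarD {n : ℕ} (Q : DyadicCube n) (ε : Fin n → Bool) : (Fin n → ℝ) → ℝ :=
  fun x => haarCube n ε Q.corner Q.side x

/-!
Write `d(Q, P)` for the number of generations from `Q` down to `P ⊆ Q`, and `r = θ ^ (1/p)`.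
Iterating additivity, the descendants of `Q` of each generation carry total mass `ν(Q)`, so the
weights `ν(P)/ν(Q) · r ^ d(Q, P)` sum to `∑ r ^ j = (1 - r)⁻¹`. Hölder's inequality against these
weights gives `M'(R)(Q) ^ p ≤ (1 - r) ^ (1 - p) · ∑_{P ⊆ Q} ν(P)/ν(Q) · r ^ d · (R_P / r ^ d) ^ p`.
After exchanging the sums over `Q` and `P`, the decay `ν(P)/ν(Q) ≤ θ ^ d = r ^ (d p)` bounds the
sum over the ancestors `Q` of `P` by `R_P ^ p · ∑ r ^ j`, so `C = (1 - θ ^ (1/p))⁻¹` works.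
-/

namespace ENNReal

lemma tsum_mul_rpow_le {ι : Type*} {p : ℝ} (hp : 1 ≤ p) (w g : ι → ℝ≥0∞) :
    (∑' i, w i * g i) ^ p ≤ (∑' i, w i) ^ (p - 1) * ∑' i, w i * g i ^ p := by
  have hp0 : 0 < p := by linarith
  have holder : ∑' i, w i * g i ≤ (∑' i, w i) ^ (1 - p⁻¹) * (∑' i, w i * g i ^ p) ^ p⁻¹ := by
    rw [ENNReal.tsum_eq_iSup_sum]
    refine iSup_le fun s => (inner_le_weight_mul_Lp_of_nonneg s hp w g).trans ?_
    have : 0 ≤ 1 - p⁻¹ := sub_nonneg.2 (inv_le_one_of_one_le₀ hp)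
    gcongr <;> exact ENNReal.sum_le_tsum s
  calc (∑' i, w i * g i) ^ p
      ≤ ((∑' i, w i) ^ (1 - p⁻¹) * (∑' i, w i * g i ^ p) ^ p⁻¹) ^ p := by gcongr
    _ = (∑' i, w i) ^ (p - 1) * ∑' i, w i * g i ^ p := by
      rw [mul_rpow_of_nonneg _ _ hp0.le, ← rpow_mul, ← rpow_mul, sub_mul, one_mul,
        inv_mul_cancel₀ hp0.ne', rpow_one]

lemma tsum_tsum_subtype_comm {α β : Type*} (r : α → β → Prop) (F : α → β → ℝ≥0∞) :
    ∑' a, ∑' b : {b // r a b}, F a b = ∑' b, ∑' a : {a // r a b}, F a b := by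
  calc ∑' a, ∑' b : {b // r a b}, F a b = ∑' a, ∑' b, {b | r a b}.indicator (F a) b :=
        tsum_congr fun a => tsum_subtype {b | r a b} (F a)
    _ = ∑' b, ∑' a, {a | r a b}.indicator (F · b) a := by
        rw [ENNReal.tsum_comm]
        congr! 3
    _ = ∑' b, ∑' a : {a // r a b}, F a b :=
        tsum_congr fun b => (tsum_subtype {a | r a b} (F · b)).symm

lemma div_mul_div_rpow_le {a b c s : ℝ≥0∞} {p : ℝ} (hp : 0 ≤ p) (hs0 : s ≠ 0) (hst : s ≠ ⊤)
    (h : a ≤ s ^ p * b) : a / b * (c / s) ^ p ≤ c ^ p :=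
  calc a / b * (c / s) ^ p ≤ s ^ p * (c ^ p / s ^ p) := by
        rw [div_rpow_of_nonneg _ _ hp]
        gcongr
        exact div_le_of_le_mul h
    _ = c ^ p := ENNReal.mul_div_cancel (by simp [hs0, hp]) (by simp [hst, hp])

lemma tsum_ofReal_of_tsum_ne_zero {ι : Type*} {f : ι → ℝ} (hf : ∀ i, 0 ≤ f i)
    (h : ∑' i, f i ≠ 0) : ∑' i, ENNReal.ofReal (f i) = ENNReal.ofReal (∑' i, f i) :=
  (ENNReal.ofReal_tsum_of_nonneg hf
    (by_contra fun hs => h (tsum_eq_zero_of_not_summable hs))).symm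

end ENNReal

namespace DyadicCube

variable {n : ℕ} {f : DyadicCube n → ℝ≥0∞} {p : ℝ}

lemma mem_toSet_iff_floor {Q : DyadicCube n} {x : Fin n → ℝ} :
    x ∈ Q.toSet ↔ ∀ i, ⌊x i * 2 ^ Q.k⌋ = Q.m i := by
  have h2 : (0:ℝ) < 2 ^ Q.k := zpow_pos two_pos _
  refine forall_congr' fun i => ?_
  rw [Int.floor_eq_iff, corner, side, zpow_neg, ← div_eq_mul_inv, inv_eq_one_div, ← add_div,
    div_le_iff₀ h2, lt_div_iff₀ h2]

lemma corner_mem (Q : DyadicCube n) : Q.corner ∈ Q.toSet :=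
  fun _ => ⟨le_rfl, lt_add_of_pos_right _ (zpow_pos two_pos _)⟩

lemma eq_of_mem_of_mem {P Q : DyadicCube n} {x : Fin n → ℝ} (hk : P.k = Q.k)
    (hP : x ∈ P.toSet) (hQ : x ∈ Q.toSet) : P = Q := by
  rw [mem_toSet_iff_floor] at hP hQ
  cases P; cases Q
  simp only at hk hP hQ
  subst hk
  congr
  funext i
  rw [← hP i, hQ i]

def ancestor (P : DyadicCube n) (k : ℤ) : DyadicCube n :=
  ⟨k, fun i => P.m i / 2 ^ (P.k - k).toNat⟩

lemma subset_ancestor {P : DyadicCube n} {k : ℤ} (hk : k ≤ P.k) :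
    P.toSet ⊆ (P.ancestor k).toSet := by
  intro x hx
  rw [mem_toSet_iff_floor] at hx ⊢
  intro i
  have hpow : (2:ℝ) ^ P.k = 2 ^ k * ((2 ^ (P.k - k).toNat : ℕ) : ℝ) := by
    rw [Nat.cast_pow, Nat.cast_ofNat, ← zpow_natCast, Int.toNat_of_nonneg (by omega),
      ← zpow_add₀ two_ne_zero, add_sub_cancel]
  have hcast : (2 : ℤ) ^ (P.k - k).toNat = ((2 ^ (P.k - k).toNat : ℕ) : ℤ) := by push_cast; rfl
  show ⌊x i * 2 ^ k⌋ = P.m i / 2 ^ (P.k - k).toNat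
  rw [← hx i, hcast, ← Int.floor_div_natCast, hpow, ← mul_assoc,
    mul_div_cancel_right₀ _ (by positivity)]

lemma subset_of_mem_of_mem {P Q : DyadicCube n} {x : Fin n → ℝ} (hk : Q.k ≤ P.k)
    (hP : x ∈ P.toSet) (hQ : x ∈ Q.toSet) : P.toSet ⊆ Q.toSet := by
  have hancestor : P.ancestor Q.k = Q := eq_of_mem_of_mem rfl (subset_ancestor hk hP) hQ
  exact hancestor ▸ subset_ancestor hk

lemma eq_of_subset_of_k_eq {P Q : DyadicCube n} (h : P.toSet ⊆ Q.toSet) (hk : P.k = Q.k) :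
    P = Q :=
  eq_of_mem_of_mem hk P.corner_mem (h P.corner_mem)

lemma eq_of_subset_of_subset {P Q Q' : DyadicCube n} (h : P.toSet ⊆ Q.toSet)
    (h' : P.toSet ⊆ Q'.toSet) (hk : Q.k = Q'.k) : Q = Q' :=
  eq_of_mem_of_mem hk (h P.corner_mem) (h' P.corner_mem)

lemma ancestor_subset {P Q : DyadicCube n} {k : ℤ} (h : P.toSet ⊆ Q.toSet) (hQk : Q.k ≤ k)
    (hkP : k ≤ P.k) : (P.ancestor k).toSet ⊆ Q.toSet :=
  subset_of_mem_of_mem hQk (subset_ancestor hkP P.corner_mem) (h P.corner_mem)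

lemma volume_toSet (Q : DyadicCube n) : volume Q.toSet = ENNReal.ofReal Q.side ^ n := by
  have : Q.toSet = Set.univ.pi fun i => Set.Ico (Q.corner i) (Q.corner i + Q.side) := by
    ext x; simp [toSet, cube]
  simp [this, Real.volume_pi_Ico]

lemma k_le_of_subset (hn : n ≠ 0) {P Q : DyadicCube n} (h : P.toSet ⊆ Q.toSet) : Q.k ≤ P.k := by
  have hvol := measure_mono (μ := volume) h
  rw [volume_toSet, volume_toSet, ENNReal.pow_le_pow_left_iff hn, side, side,
    ENNReal.ofReal_le_ofReal_iff (zpow_pos two_pos _).le,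
    zpow_le_zpow_iff_right₀ one_lt_two] at hvol
  omega

lemma tsum_generation_eq
    (hadd : ∀ Q : DyadicCube n,
      ∑' P : {P : DyadicCube n // P.toSet ⊆ Q.toSet ∧ P.k = Q.k + 1}, f P.1 = f Q)
    (j : ℕ) (Q : DyadicCube n) :
    ∑' P : {P : DyadicCube n // P.toSet ⊆ Q.toSet ∧ P.k = Q.k + j}, f P.1 = f Q := by
  induction j generalizing Q with
  | zero =>
    have hQ (P : {P : DyadicCube n // P.toSet ⊆ Q.toSet ∧ P.k = Q.k + (0 : ℕ)}) : P.1 = Q :=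
      eq_of_subset_of_k_eq P.2.1 (by simpa using P.2.2)
    rw [tsum_eq_single ⟨Q, subset_rfl, by simp⟩ fun P hP => absurd (Subtype.ext (hQ P)) hP]
  | succ j ih =>
    -- a descendant of generation `j + 1` is a descendant of generation `j` of a unique child
    let e : (Σ c : {c : DyadicCube n // c.toSet ⊆ Q.toSet ∧ c.k = Q.k + 1},
          {P : DyadicCube n // P.toSet ⊆ c.1.toSet ∧ P.k = c.1.k + j}) →
        {P : DyadicCube n // P.toSet ⊆ Q.toSet ∧ P.k = Q.k + (j + 1 : ℕ)} :=
      fun x => ⟨x.2.1, x.2.2.1.trans x.1.2.1, by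
        have := x.2.2.2; have := x.1.2.2; push_cast; omega⟩
    have he : e.Bijective := by
      refine ⟨fun x y hxy => ?_, fun P => ?_⟩
      · have hP : x.2.1 = y.2.1 := congrArg Subtype.val hxy
        refine Sigma.subtype_ext (Subtype.ext ?_) hP
        exact eq_of_subset_of_subset x.2.2.1 (hP ▸ y.2.2.1) (by rw [x.1.2.2, y.1.2.2])
      · have hk : Q.k + 1 ≤ P.1.k := by have := P.2.2; push_cast at this; omega
        exact ⟨⟨⟨P.1.ancestor (Q.k + 1), ancestor_subset P.2.1 (by omega) hk, rfl⟩,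
          ⟨P.1, subset_ancestor hk, by
            have := P.2.2; push_cast at this; simp only [ancestor]; omega⟩⟩, rfl⟩
    rw [← (Equiv.ofBijective e he).tsum_eq, ENNReal.tsum_sigma']
    simp only [Equiv.ofBijective_apply, e, ih, hadd]

lemma tsum_subcubes_eq (hn : n ≠ 0) (Q : DyadicCube n) (F : DyadicCube n → ℝ≥0∞) :
    ∑' P : {P : DyadicCube n // P.toSet ⊆ Q.toSet}, F P.1 =
      ∑' j : ℕ, ∑' P : {P : DyadicCube n // P.toSet ⊆ Q.toSet ∧ P.k = Q.k + j}, F P.1 := by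
  let e : (Σ j : ℕ, {P : DyadicCube n // P.toSet ⊆ Q.toSet ∧ P.k = Q.k + j}) →
      {P : DyadicCube n // P.toSet ⊆ Q.toSet} := fun x => ⟨x.2.1, x.2.2.1⟩
  have he : e.Bijective := by
    refine ⟨fun x y hxy => ?_, fun P => ?_⟩
    · have hP : x.2.1 = y.2.1 := congrArg Subtype.val hxy
      have hx := x.2.2.2
      have hy := y.2.2.2
      exact Sigma.subtype_ext (by rw [hP] at hx; omega) hP
    · have := k_le_of_subset hn P.2
      exact ⟨⟨(P.1.k - Q.k).toNat, P.1, P.2, by omega⟩, rfl⟩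
  rw [← (Equiv.ofBijective e he).tsum_eq, ENNReal.tsum_sigma']
  rfl

lemma tsum_subcubes_mul_depth (hn : n ≠ 0)
    (hadd : ∀ Q : DyadicCube n,
      ∑' P : {P : DyadicCube n // P.toSet ⊆ Q.toSet ∧ P.k = Q.k + 1}, f P.1 = f Q)
    (Q : DyadicCube n) (φ : ℕ → ℝ≥0∞) :
    ∑' P : {P : DyadicCube n // P.toSet ⊆ Q.toSet}, f P.1 * φ (P.1.k - Q.k).toNat =
      f Q * ∑' j, φ j := by
  rw [tsum_subcubes_eq hn Q fun P => f P * φ (P.k - Q.k).toNat, ← ENNReal.tsum_mul_left]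
  refine tsum_congr fun j => ?_
  have hdepth (P : {P : DyadicCube n // P.toSet ⊆ Q.toSet ∧ P.k = Q.k + j}) :
      (P.1.k - Q.k).toNat = j := by
    have := P.2.2; omega
  simp only [hdepth, ENNReal.tsum_mul_right, tsum_generation_eq hadd]

lemma tsum_supercubes_le (hn : n ≠ 0) (P : DyadicCube n) (φ : ℕ → ℝ≥0∞) :
    ∑' Q : {Q : DyadicCube n // P.toSet ⊆ Q.toSet}, φ (P.k - Q.1.k).toNat ≤ ∑' j, φ j := by
  refine ENNReal.tsum_comp_le_tsum_of_injective (fun Q Q' h => ?_) φ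
  have := k_le_of_subset hn Q.2
  have := k_le_of_subset hn Q'.2
  exact Subtype.ext (eq_of_subset_of_subset Q.2 Q'.2 (by omega))

lemma rpow_average_le (hn : n ≠ 0) (hp : 1 ≤ p) {r : ℝ≥0∞} (hr0 : r ≠ 0) (hrt : r ≠ ⊤)
    (hf0 : ∀ Q, f Q ≠ 0) (hft : ∀ Q, f Q ≠ ⊤)
    (hadd : ∀ Q : DyadicCube n,
      ∑' P : {P : DyadicCube n // P.toSet ⊆ Q.toSet ∧ P.k = Q.k + 1}, f P.1 = f Q)
    (g : DyadicCube n → ℝ≥0∞) (Q : DyadicCube n) :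
    ((∑' P : {P : DyadicCube n // P.toSet ⊆ Q.toSet}, f P.1 * g P.1) / f Q) ^ p ≤
      (1 - r)⁻¹ ^ (p - 1) * ∑' P : {P : DyadicCube n // P.toSet ⊆ Q.toSet},
        f P.1 / f Q * r ^ (P.1.k - Q.k).toNat * (g P.1 / r ^ (P.1.k - Q.k).toNat) ^ p := by
  have hweights : ∑' P : {P : DyadicCube n // P.toSet ⊆ Q.toSet},
      f P.1 / f Q * r ^ (P.1.k - Q.k).toNat = (1 - r)⁻¹ := by
    simp only [div_eq_mul_inv, mul_right_comm _ (f Q)⁻¹, ENNReal.tsum_mul_right,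
      tsum_subcubes_mul_depth hn hadd, ENNReal.tsum_geometric]
    rw [mul_right_comm, ENNReal.mul_inv_cancel (hf0 Q) (hft Q), one_mul]
  have hsplit : (∑' P : {P : DyadicCube n // P.toSet ⊆ Q.toSet}, f P.1 * g P.1) / f Q =
      ∑' P : {P : DyadicCube n // P.toSet ⊆ Q.toSet},
        f P.1 / f Q * r ^ (P.1.k - Q.k).toNat * (g P.1 / r ^ (P.1.k - Q.k).toNat) := by
    rw [div_eq_mul_inv, ← ENNReal.tsum_mul_right]
    refine tsum_congr fun P => ?_
    rw [mul_assoc (f P.1 / f Q),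
      ENNReal.mul_div_cancel (pow_ne_zero _ hr0) (ENNReal.pow_ne_top hrt), div_eq_mul_inv]
    ring
  rw [hsplit, ← hweights]
  exact ENNReal.tsum_mul_rpow_le hp _ _

theorem tsum_rpow_average_le (hn : n ≠ 0) (hp : 1 ≤ p) {θ : ℝ≥0∞} (hθ0 : θ ≠ 0) (hθt : θ ≠ ⊤)
    (hf0 : ∀ Q, f Q ≠ 0) (hft : ∀ Q, f Q ≠ ⊤)
    (hdec : ∀ P Q : DyadicCube n, P.toSet ⊆ Q.toSet → f P ≤ θ ^ (P.k - Q.k).toNat * f Q)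
    (hadd : ∀ Q : DyadicCube n,
      ∑' P : {P : DyadicCube n // P.toSet ⊆ Q.toSet ∧ P.k = Q.k + 1}, f P.1 = f Q)
    (g : DyadicCube n → ℝ≥0∞) :
    ∑' Q : DyadicCube n,
        ((∑' P : {P : DyadicCube n // P.toSet ⊆ Q.toSet}, f P.1 * g P.1) / f Q) ^ p ≤
      (1 - θ ^ p⁻¹)⁻¹ ^ p * ∑' Q : DyadicCube n, g Q ^ p := by
  have hp0 : 0 < p := by linarith
  set r := θ ^ p⁻¹
  have hr0 : r ≠ 0 := by simp [r, hθ0, hθt]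
  have hrt : r ≠ ⊤ := by simp [r, hθ0, hθt]
  have hθ (d : ℕ) : θ ^ d = (r ^ d) ^ p := by
    rw [← ENNReal.rpow_natCast, ← ENNReal.rpow_natCast, ← ENNReal.rpow_mul, mul_comm,
      ENNReal.rpow_mul, ENNReal.rpow_inv_rpow hp0.ne']
  set A := (1 - r)⁻¹
  let F (Q P : DyadicCube n) : ℝ≥0∞ :=
    f P / f Q * r ^ (P.k - Q.k).toNat * (g P / r ^ (P.k - Q.k).toNat) ^ p
  calc _ ≤ ∑' Q : DyadicCube n, A ^ (p - 1) * ∑' P : {P : DyadicCube n // P.toSet ⊆ Q.toSet},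
        F Q P.1 := ENNReal.tsum_le_tsum (rpow_average_le hn hp hr0 hrt hf0 hft hadd g)
    _ = A ^ (p - 1) * ∑' P : DyadicCube n, ∑' Q : {Q : DyadicCube n // P.toSet ⊆ Q.toSet},
        F Q.1 P := by
      rw [ENNReal.tsum_mul_left, ENNReal.tsum_tsum_subtype_comm (fun Q P => P.toSet ⊆ Q.toSet) F]
    _ ≤ A ^ (p - 1) * ∑' P : DyadicCube n, ∑' Q : {Q : DyadicCube n // P.toSet ⊆ Q.toSet},
        g P ^ p * r ^ (P.k - Q.1.k).toNat := by
      gcongr with P Q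
      rw [show F Q P = f P / f Q * (g P / r ^ (P.k - Q.1.k).toNat) ^ p * r ^ (P.k - Q.1.k).toNat
        from mul_right_comm _ _ _]
      gcongr ?_ * _
      exact ENNReal.div_mul_div_rpow_le hp0.le (pow_ne_zero _ hr0) (ENNReal.pow_ne_top hrt)
        (hθ _ ▸ hdec P Q Q.2)
    _ ≤ A ^ (p - 1) * ∑' P : DyadicCube n, g P ^ p * A := by
      gcongr with P
      rw [ENNReal.tsum_mul_left]
      gcongr
      exact (tsum_supercubes_le hn P (r ^ ·)).trans_eq (ENNReal.tsum_geometric r)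
    _ = A ^ p * ∑' Q : DyadicCube n, g Q ^ p := by
      rw [ENNReal.tsum_mul_right, mul_comm _ A, ← mul_assoc]
      congr 1
      calc A ^ (p - 1) * A = A ^ (p - 1) * A ^ (1 : ℝ) := by rw [ENNReal.rpow_one]
        _ = A ^ p := by
          rw [← ENNReal.rpow_add_of_nonneg _ _ (by linarith) zero_le_one, sub_add_cancel]

lemma false_of_decay_of_dim_zero {θ : ℝ} (hθ1 : θ < 1) {ν : DyadicCube 0 → ℝ}
    (hν : ∀ Q, 0 < ν Q)
    (hdec : ∀ P Q : DyadicCube 0, P.toSet ⊆ Q.toSet → ν P ≤ θ ^ (P.k - Q.k).toNat * ν Q) :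
    False := by
  -- in dimension `0` every dyadic cube is the whole (one-point) space
  have hsub (P Q : DyadicCube 0) : P.toSet ⊆ Q.toSet := fun _ _ i => i.elim0
  have h₀ : ν ⟨0, Fin.elim0⟩ ≤ θ ^ 0 * ν ⟨1, Fin.elim0⟩ :=
    hdec ⟨0, Fin.elim0⟩ ⟨1, Fin.elim0⟩ (hsub _ _)
  have h₁ : ν ⟨1, Fin.elim0⟩ ≤ θ ^ 1 * ν ⟨0, Fin.elim0⟩ :=
    hdec ⟨1, Fin.elim0⟩ ⟨0, Fin.elim0⟩ (hsub _ _)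
  rw [pow_zero, one_mul] at h₀
  rw [pow_one] at h₁
  nlinarith [hν ⟨0, Fin.elim0⟩, hν ⟨1, Fin.elim0⟩]

end DyadicCube

/-- The averaging operator `M'(R)(Q) = ν(Q)⁻¹ Σ_{P ⊆ Q} ν(P) R_P` is bounded on `ℓ^p`
for `1 ≤ p < ∞`, with constant depending only on `θ`, `p`, `n`, whenever `ν` satisfies the
geometric decay `ν(P) ≤ θ^k ν(Q)` and additivity over children. -/
theorem stmt12 (n : ℕ) (θ : ℝ) (hθ0 : 0 < θ) (hθ1 : θ < 1) (p : ℝ) (hp : 1 ≤ p) :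
    ∃ C : ℝ≥0∞, C ≠ ⊤ ∧
      ∀ ν : DyadicCube n → ℝ, (∀ Q, 0 < ν Q) →
        (∀ P Q : DyadicCube n, P.toSet ⊆ Q.toSet →
          ν P ≤ θ ^ (P.k - Q.k).toNat * ν Q) →
        (∀ Q : DyadicCube n,
          ∑' P : {P : DyadicCube n // P.toSet ⊆ Q.toSet ∧ P.k = Q.k + 1}, ν P.1 = ν Q) →
        ∀ R : DyadicCube n → ℝ, (∀ P, 0 ≤ R P) →
          ∑' Q : DyadicCube n,
              ((∑' P : {P : DyadicCube n // P.toSet ⊆ Q.toSet},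
                  ENNReal.ofReal (ν P.1) * ENNReal.ofReal (R P.1)) /
                ENNReal.ofReal (ν Q)) ^ p
            ≤ C ^ p * ∑' Q : DyadicCube n, ENNReal.ofReal (R Q) ^ p := by
  have hr1 : ENNReal.ofReal θ ^ p⁻¹ < 1 :=
    ENNReal.rpow_lt_one (ENNReal.ofReal_lt_one.2 hθ1) (by positivity)
  refine ⟨(1 - ENNReal.ofReal θ ^ p⁻¹)⁻¹, ENNReal.inv_ne_top.2 (tsub_pos_of_lt hr1).ne',
    fun ν hν hdec hadd R _ => ?_⟩
  rcases eq_or_ne n 0 with rfl | hn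
  · exact (DyadicCube.false_of_decay_of_dim_zero hθ1 hν hdec).elim
  refine DyadicCube.tsum_rpow_average_le hn hp (ENNReal.ofReal_pos.2 hθ0).ne'
    ENNReal.ofReal_ne_top (fun Q => (ENNReal.ofReal_pos.2 (hν Q)).ne')
    (fun _ => ENNReal.ofReal_ne_top)
    (fun P Q h => ?_) (fun Q => ?_) _
  · rw [← ENNReal.ofReal_pow hθ0.le, ← ENNReal.ofReal_mul (by positivity)]
    exact ENNReal.ofReal_le_ofReal (hdec P Q h)
  · rw [ENNReal.tsum_ofReal_of_tsum_ne_zero (fun _ => (hν _).le)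
      (by rw [hadd Q]; exact (hν Q).ne'), hadd Q]
end
end

section
/- Let μ, λ ∈ A_2 on ℝ^n and ν = μ^{1/2}λ^{-1/2}. For every cube Q, one has the one-sided weighted Cauchy–Schwarz estimate: (1/ν(Q)) ∫_Q |b(x) − ⟨b⟩_Q| dx ≤ C · ((1/μ(Q)) ∫_Q |b(x) − ⟨b⟩_Q|^2 λ(x) dx)^{1/2}, where C depends only on [μ]_{A_2} and [λ]_{A_2}. -/
open MeasureTheory Filter
open scoped ENNReal BigOperators

noncomputable section

/-! Cauchy–Schwarz in the form `(∫ √(p q))² ≤ ∫ p · ∫ q` gives three estimates on a cube `Q`: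
`(∫_Q |f|)² ≤ λ⁻¹(Q) ∫_Q f² λ`, `|Q|² ≤ ν(Q) ν⁻¹(Q)` and `ν⁻¹(Q)² ≤ μ⁻¹(Q) λ(Q)`.
The last two, combined with the `A_2` bounds `μ(Q) μ⁻¹(Q) ≤ [μ] |Q|²` and
`λ(Q) λ⁻¹(Q) ≤ [λ] |Q|²`, give `μ(Q) λ⁻¹(Q) ≤ [μ] [λ] ν(Q)²`, which turns the first one into the
estimate with `C = √([μ] [λ])`. -/

section CauchySchwarz

open Set

variable {α : Type*} [MeasurableSpace α] {ρ : Measure α}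

theorem sq_integral_sqrt_mul_le {p q : α → ℝ} (hp₀ : 0 ≤ᵐ[ρ] p) (hq₀ : 0 ≤ᵐ[ρ] q)
    (hp : Integrable p ρ) (hq : Integrable q ρ) :
    (∫ x, √(p x * q x) ∂ρ) ^ 2 ≤ (∫ x, p x ∂ρ) * ∫ x, q x ∂ρ := by
  have memLp_sqrt : ∀ {f : α → ℝ}, 0 ≤ᵐ[ρ] f → Integrable f ρ →
      MemLp (fun x => √(f x)) (ENNReal.ofReal 2) ρ := fun {f} hf₀ hf => by
    rw [ENNReal.ofReal_ofNat, memLp_two_iff_integrable_sq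
      (Real.continuous_sqrt.comp_aestronglyMeasurable hf.aestronglyMeasurable)]
    refine hf.congr ?_
    filter_upwards [hf₀] with x hx using (Real.sq_sqrt hx).symm
  have holder := integral_mul_le_Lp_mul_Lq_of_nonneg Real.HolderConjugate.two_two
    (Eventually.of_forall fun x => Real.sqrt_nonneg (p x))
    (Eventually.of_forall fun x => Real.sqrt_nonneg (q x)) (memLp_sqrt hp₀ hp) (memLp_sqrt hq₀ hq)
  have sq_sqrt : ∀ {f : α → ℝ}, 0 ≤ᵐ[ρ] f → ∫ x, √(f x) ^ (2 : ℝ) ∂ρ = ∫ x, f x ∂ρ :=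
    fun {f} hf₀ => integral_congr_ae <| by
      filter_upwards [hf₀] with x hx
      rw [Real.rpow_two, Real.sq_sqrt hx]
  rw [sq_sqrt hp₀, sq_sqrt hq₀, ← Real.sqrt_eq_rpow, ← Real.sqrt_eq_rpow] at holder
  have sqrt_mul : ∫ x, √(p x * q x) ∂ρ = ∫ x, √(p x) * √(q x) ∂ρ := integral_congr_ae <| by
    filter_upwards [hq₀] with x hx using Real.sqrt_mul' _ hx
  calc (∫ x, √(p x * q x) ∂ρ) ^ 2
      ≤ (√(∫ x, p x ∂ρ) * √(∫ x, q x ∂ρ)) ^ 2 := by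
        rw [sqrt_mul]
        exact pow_le_pow_left₀ (integral_nonneg fun x => by positivity) holder 2
    _ = (∫ x, p x ∂ρ) * ∫ x, q x ∂ρ := by
        rw [mul_pow, Real.sq_sqrt (integral_nonneg_of_ae hp₀),
          Real.sq_sqrt (integral_nonneg_of_ae hq₀)]

theorem inv_mul_integral_abs_le {f lam : α → ℝ} {A N K : ℝ} (hlam : ∀ x, 0 < lam x)
    (hlam_inv : Integrable (fun x => (lam x)⁻¹) ρ) (hf : Integrable (fun x => f x ^ 2 * lam x) ρ)
    (hA : 0 < A) (hN : 0 < N) (hAN : A * ∫ x, (lam x)⁻¹ ∂ρ ≤ K * N ^ 2) :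
    N⁻¹ * ∫ x, |f x| ∂ρ ≤ √K * √(A⁻¹ * ∫ x, f x ^ 2 * lam x ∂ρ) := by
  set B' := ∫ x, (lam x)⁻¹ ∂ρ
  set J := ∫ x, f x ^ 2 * lam x ∂ρ
  have hJ : 0 ≤ J := integral_nonneg fun x => mul_nonneg (sq_nonneg _) (hlam x).le
  have cauchy_schwarz : (∫ x, |f x| ∂ρ) ^ 2 ≤ B' * J := by
    have h := sq_integral_sqrt_mul_le (Eventually.of_forall fun x => (inv_pos.2 (hlam x)).le)
      (Eventually.of_forall fun x => mul_nonneg (sq_nonneg (f x)) (hlam x).le) hlam_inv hf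
    have hsqrt : ∀ x, √((lam x)⁻¹ * (f x ^ 2 * lam x)) = |f x| := fun x => by
      rw [mul_comm (f x ^ 2), inv_mul_cancel_left₀ (hlam x).ne', Real.sqrt_sq_eq_abs]
    simpa only [hsqrt] using h
  have hB' : B' ≤ K * N ^ 2 * A⁻¹ := by
    rw [← div_eq_mul_inv, le_div_iff₀ hA, mul_comm]
    exact hAN
  rw [← Real.sqrt_mul' _ (by positivity)]
  refine Real.le_sqrt_of_sq_le ?_
  calc (N⁻¹ * ∫ x, |f x| ∂ρ) ^ 2 = (N ^ 2)⁻¹ * (∫ x, |f x| ∂ρ) ^ 2 := by rw [mul_pow, inv_pow]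
    _ ≤ (N ^ 2)⁻¹ * (B' * J) := by gcongr
    _ ≤ (N ^ 2)⁻¹ * (K * N ^ 2 * A⁻¹ * J) := by gcongr
    _ = K * (A⁻¹ * J) := by field_simp

theorem integral_mul_integral_inv_le_sq_integral_sqrt_div {μ lam : α → ℝ} {Cμ Clam : ℝ}
    (hμ : ∀ x, 0 < μ x) (hlam : ∀ x, 0 < lam x)
    (hμ_inv : Integrable (fun x => (μ x)⁻¹) ρ) (hlam_int : Integrable lam ρ)
    (hν : Integrable (fun x => √(μ x / lam x)) ρ) (hν' : Integrable (fun x => √(lam x / μ x)) ρ)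
    (hρ : 0 < ρ.real univ)
    (hAμ : (∫ x, μ x ∂ρ) * (∫ x, (μ x)⁻¹ ∂ρ) ≤ Cμ * ρ.real univ ^ 2)
    (hAlam : (∫ x, lam x ∂ρ) * (∫ x, (lam x)⁻¹ ∂ρ) ≤ Clam * ρ.real univ ^ 2) :
    (∫ x, μ x ∂ρ) * (∫ x, (lam x)⁻¹ ∂ρ) ≤ Cμ * Clam * (∫ x, √(μ x / lam x) ∂ρ) ^ 2 := by
  set V := ρ.real univ
  set A := ∫ x, μ x ∂ρ
  set A' := ∫ x, (μ x)⁻¹ ∂ρ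
  set B := ∫ x, lam x ∂ρ
  set B' := ∫ x, (lam x)⁻¹ ∂ρ
  set N := ∫ x, √(μ x / lam x) ∂ρ
  set N' := ∫ x, √(lam x / μ x) ∂ρ
  have hVN : V ^ 2 ≤ N * N' := by
    have h := sq_integral_sqrt_mul_le (Eventually.of_forall fun x => Real.sqrt_nonneg _)
      (Eventually.of_forall fun x => Real.sqrt_nonneg _) hν hν'
    have hone : ∀ x, √(√(μ x / lam x) * √(lam x / μ x)) = 1 := fun x => by
      rw [← Real.sqrt_mul (div_nonneg (hμ x).le (hlam x).le),
        div_mul_div_cancel₀ (hlam x).ne', div_self (hμ x).ne', Real.sqrt_one, Real.sqrt_one]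
    simpa only [hone, integral_const, smul_eq_mul, mul_one] using h
  have hN'A'B : N' ^ 2 ≤ A' * B := by
    have h := sq_integral_sqrt_mul_le (Eventually.of_forall fun x => (inv_pos.2 (hμ x)).le)
      (Eventually.of_forall fun x => (hlam x).le) hμ_inv hlam_int
    simpa only [inv_mul_eq_div] using h
  have hA : 0 ≤ A := integral_nonneg fun x => (hμ x).le
  have hA' : 0 ≤ A' := integral_nonneg fun x => (inv_pos.2 (hμ x)).le
  have hB : 0 ≤ B := integral_nonneg fun x => (hlam x).le
  have hB' : 0 ≤ B' := integral_nonneg fun x => (inv_pos.2 (hlam x)).le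
  have hN : 0 ≤ N := integral_nonneg fun x => Real.sqrt_nonneg _
  have hV2 : 0 < V ^ 2 := pow_pos hρ 2
  have hCμ : 0 ≤ Cμ := nonneg_of_mul_nonneg_left ((mul_nonneg hA hA').trans hAμ) hV2
  have hClam : 0 ≤ Clam := nonneg_of_mul_nonneg_left ((mul_nonneg hB hB').trans hAlam) hV2
  have hC : 0 ≤ Cμ * Clam := mul_nonneg hCμ hClam
  have hN' : 0 < N' := pos_of_mul_pos_right (hV2.trans_le hVN) hN
  have hA'B : 0 < A' * B := lt_of_lt_of_le (pow_pos hN' 2) hN'A'B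
  refine le_of_mul_le_mul_right ?_ hA'B
  calc A * B' * (A' * B) = (A * A') * (B * B') := by ring
    _ ≤ (Cμ * V ^ 2) * (Clam * V ^ 2) :=
        mul_le_mul hAμ hAlam (mul_nonneg hB hB') (mul_nonneg hCμ hV2.le)
    _ = Cμ * Clam * (V ^ 2) ^ 2 := by ring
    _ ≤ Cμ * Clam * (N * N') ^ 2 := by gcongr
    _ = Cμ * Clam * N ^ 2 * N' ^ 2 := by ring
    _ ≤ Cμ * Clam * N ^ 2 * (A' * B) := by gcongr

end CauchySchwarz

theorem cube_eq_pi (n : ℕ) (c : Fin n → ℝ) (l : ℝ) :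
    cube n c l = Set.univ.pi fun i => Set.Ico (c i) (c i + l) := by
  ext x
  simp [cube, Set.mem_pi]

theorem volume_real_cube (n : ℕ) (c : Fin n → ℝ) {l : ℝ} (hl : 0 ≤ l) :
    volume.real (cube n c l) = l ^ n := by
  simp [measureReal_def, cube_eq_pi, volume_pi_pi, Real.volume_Ico, hl]

theorem IsApBound.integral_mul_integral_inv_le {n : ℕ} {w : (Fin n → ℝ) → ℝ} {C : ℝ}
    (hw : IsApBound n 2 w C) (c : Fin n → ℝ) {l : ℝ} (hl : 0 < l) :
    (∫ x in cube n c l, w x) * (∫ x in cube n c l, (w x)⁻¹) ≤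
      C * volume.real (cube n c l) ^ 2 := by
  have h := hw c l hl
  norm_num [← measureReal_def, Real.rpow_neg_one] at h
  have hV : 0 < volume.real (cube n c l) := by
    rw [volume_real_cube n c hl.le]
    positivity
  calc (∫ x in cube n c l, w x) * (∫ x in cube n c l, (w x)⁻¹)
      = ((volume.real (cube n c l))⁻¹ * ∫ x in cube n c l, w x) *
          ((volume.real (cube n c l))⁻¹ * ∫ x in cube n c l, (w x)⁻¹) *
          volume.real (cube n c l) ^ 2 := by field_simp
    _ ≤ C * volume.real (cube n c l) ^ 2 := by gcongr

theorem rpow_half_mul_rpow_neg_half {a b : ℝ} (ha : 0 ≤ a) (hb : 0 ≤ b) :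
    a ^ ((1 : ℝ) / 2) * b ^ (-(1 : ℝ) / 2) = √(a / b) := by
  rw [neg_div, Real.rpow_neg hb, ← div_eq_mul_inv, ← Real.div_rpow ha hb, Real.sqrt_eq_rpow]

theorem stmt18_general (n : ℕ) (Cμ Clam : ℝ) :
    ∃ C : ℝ, 0 < C ∧
      ∀ μ lam : (Fin n → ℝ) → ℝ,
        (∀ x, 0 < μ x) → (∀ x, 0 < lam x) →
        IsApBound n 2 μ Cμ → IsApBound n 2 lam Clam →
        ∀ b : (Fin n → ℝ) → ℝ, ∀ c : Fin n → ℝ, ∀ l : ℝ, 0 < l →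
          IntegrableOn b (cube n c l) volume →
          IntegrableOn μ (cube n c l) volume →
          IntegrableOn lam (cube n c l) volume →
          IntegrableOn (fun x => (μ x)⁻¹) (cube n c l) volume →
          IntegrableOn (fun x => (lam x)⁻¹) (cube n c l) volume →
          IntegrableOn (fun x => μ x ^ ((1:ℝ)/2) * lam x ^ (-(1:ℝ)/2)) (cube n c l) volume →
          IntegrableOn (fun x => μ x ^ (-(1:ℝ)/2) * lam x ^ ((1:ℝ)/2)) (cube n c l) volume →
          IntegrableOn
            (fun x =>
              (b x - (volume (cube n c l)).toReal⁻¹ * ∫ z in cube n c l, b z) ^ 2 * lam x)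
            (cube n c l) volume →
          0 < (∫ x in cube n c l, μ x) →
          0 < (∫ x in cube n c l, μ x ^ ((1:ℝ)/2) * lam x ^ (-(1:ℝ)/2)) →
          (∫ x in cube n c l, μ x ^ ((1:ℝ)/2) * lam x ^ (-(1:ℝ)/2))⁻¹ *
              ∫ x in cube n c l,
                |b x - (volume (cube n c l)).toReal⁻¹ * ∫ z in cube n c l, b z|
            ≤ C * Real.sqrt
                ((∫ x in cube n c l, μ x)⁻¹ *
                  ∫ x in cube n c l,
                    (b x - (volume (cube n c l)).toReal⁻¹ * ∫ z in cube n c l, b z) ^ 2 *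
                      lam x) := by
  refine ⟨√(Cμ * Clam) + 1, by positivity, ?_⟩
  intro μ lam hμ hlam hμ_A2 hlam_A2 b c l hl _ _ hlam_int hμ_inv hlam_inv hν hν' hf hA hN
  have hν_sqrt : ∀ x, μ x ^ ((1 : ℝ) / 2) * lam x ^ (-(1 : ℝ) / 2) = √(μ x / lam x) :=
    fun x => rpow_half_mul_rpow_neg_half (hμ x).le (hlam x).le
  have hν'_sqrt : ∀ x, μ x ^ (-(1 : ℝ) / 2) * lam x ^ ((1 : ℝ) / 2) = √(lam x / μ x) :=
    fun x => by rw [mul_comm]; exact rpow_half_mul_rpow_neg_half (hlam x).le (hμ x).le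
  simp only [hν_sqrt] at hν hN ⊢
  simp only [hν'_sqrt] at hν'
  have hQ : (volume.restrict (cube n c l)).real Set.univ = volume.real (cube n c l) :=
    measureReal_restrict_apply_univ _
  have hμ_lam := integral_mul_integral_inv_le_sq_integral_sqrt_div hμ hlam hμ_inv hlam_int hν hν'
    (by rw [hQ, volume_real_cube n c hl.le]; positivity)
    (hQ ▸ hμ_A2.integral_mul_integral_inv_le c hl) (hQ ▸ hlam_A2.integral_mul_integral_inv_le c hl)
  calc _ ≤ √(Cμ * Clam) * _ := inv_mul_integral_abs_le hlam hlam_inv hf hA hN hμ_lam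
    _ ≤ _ := by gcongr; linarith

/-- One-sided weighted Cauchy–Schwarz estimate: there is `C`, depending only on the `A_2`
bounds of `μ` and `λ`, such that for every cube `Q`,
`(1/ν(Q)) ∫_Q |b - ⟨b⟩_Q| ≤ C ((1/μ(Q)) ∫_Q |b - ⟨b⟩_Q|² λ)^{1/2}`,
where `ν = μ^{1/2} λ^{-1/2}`. -/
theorem stmt18 (n : ℕ) (Cμ Clam : ℝ) (hCμ : 0 ≤ Cμ) (hClam : 0 ≤ Clam) :
    ∃ C : ℝ, 0 < C ∧
      ∀ μ lam : (Fin n → ℝ) → ℝ,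
        (∀ x, 0 < μ x) → (∀ x, 0 < lam x) →
        IsApBound n 2 μ Cμ → IsApBound n 2 lam Clam →
        ∀ b : (Fin n → ℝ) → ℝ, ∀ c : Fin n → ℝ, ∀ l : ℝ, 0 < l →
          IntegrableOn b (cube n c l) volume →
          IntegrableOn μ (cube n c l) volume →
          IntegrableOn lam (cube n c l) volume →
          IntegrableOn (fun x => (μ x)⁻¹) (cube n c l) volume →
          IntegrableOn (fun x => (lam x)⁻¹) (cube n c l) volume →
          IntegrableOn (fun x => μ x ^ ((1:ℝ)/2) * lam x ^ (-(1:ℝ)/2)) (cube n c l) volume →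
          IntegrableOn (fun x => μ x ^ (-(1:ℝ)/2) * lam x ^ ((1:ℝ)/2)) (cube n c l) volume →
          IntegrableOn
            (fun x =>
              (b x - (volume (cube n c l)).toReal⁻¹ * ∫ z in cube n c l, b z) ^ 2 * lam x)
            (cube n c l) volume →
          0 < (∫ x in cube n c l, μ x) →
          0 < (∫ x in cube n c l, μ x ^ ((1:ℝ)/2) * lam x ^ (-(1:ℝ)/2)) →
          (∫ x in cube n c l, μ x ^ ((1:ℝ)/2) * lam x ^ (-(1:ℝ)/2))⁻¹ *
              ∫ x in cube n c l,
                |b x - (volume (cube n c l)).toReal⁻¹ * ∫ z in cube n c l, b z|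
            ≤ C * Real.sqrt
                ((∫ x in cube n c l, μ x)⁻¹ *
                  ∫ x in cube n c l,
                    (b x - (volume (cube n c l)).toReal⁻¹ * ∫ z in cube n c l, b z) ^ 2 *
                      lam x) :=
  stmt18_general n Cμ Clam
end
end
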